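/- arXiv:1601.04223 — 8 statements merged into one kernel-verified Lean document; each statement's English description precedes it below -/
import Mathlib

section
/- For every integer k ≥ 1, the k-th Catalan number satisfies C_k < 2^{2k+1} / ((k+1)·√(π(4k+1))). -/
open Real Filter Topology

noncomputable def C (k : ℕ) : ℝ := (Nat.choose (2 * k) k : ℝ) / ((k : ℝ) + 1)

noncomputable def S (n : ℕ) : ℝ := ∑ k ∈ Finset.Icc 1 n, C k

noncomputable def u (n : ℕ) : ℝ := 4 ^ (n + 1) / (3 * Real.sqrt (π * (n : ℝ) ^ 3))

noncomputable def ϑ (n : ℕ) : ℝ := 4 ^ (n + 1) / (3 * ((n : ℝ) + 1) * Real.sqrt (π * n))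

/-!
The sequence `b n = (2n choose n)² · π(4n+1) / 16ⁿ` equals `π · (4n+1)/(2n+1) / W n`, where `W` is
the Wallis product, so it tends to `π · 2 / (π/2) = 4`. The central binomial recursion gives
`b (n+1) / b n = (16n³+36n²+24n+5) / (16n³+36n²+24n+4) > 1`, so `b` is strictly increasing and
hence `b n < 4` for every `n`. Taking square roots, `(2n choose n) · √(π(4n+1)) < 2^(2n+1)`.
-/

noncomputable def scaledCentralBinomSq (n : ℕ) : ℝ :=
  (Nat.centralBinom n : ℝ) ^ 2 * (π * (4 * n + 1)) / 16 ^ n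

lemma centralBinom_mul_factorial_sq (n : ℕ) :
    Nat.centralBinom n * n.factorial ^ 2 = (2 * n).factorial := by
  have h := Nat.choose_mul_factorial_mul_factorial (show n ≤ 2 * n by omega)
  rw [show 2 * n - n = n by omega] at h
  rw [Nat.centralBinom, ← h]
  ring

lemma scaledCentralBinomSq_eq_div_wallis (n : ℕ) :
    scaledCentralBinomSq n = π * ((4 * n + 1) / (2 * n + 1)) / Real.Wallis.W n := by
  have hfac : (Nat.centralBinom n : ℝ) * (n.factorial : ℝ) ^ 2 = (2 * n).factorial := by
    exact_mod_cast centralBinom_mul_factorial_sq n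
  have h16 : (2 : ℝ) ^ (4 * n) = 16 ^ n := by rw [pow_mul]; norm_num
  have : (Nat.centralBinom n : ℝ) ≠ 0 := by exact_mod_cast (Nat.centralBinom_pos n).ne'
  rw [scaledCentralBinomSq, Real.Wallis.W_eq_factorial_ratio, h16, ← hfac]
  field_simp

lemma tendsto_four_mul_add_one_div_two_mul_add_one :
    Tendsto (fun n : ℕ ↦ (4 * (n : ℝ) + 1) / (2 * n + 1)) atTop (𝓝 2) := by
  have hden : Tendsto (fun n : ℕ ↦ 2 * (n : ℝ) + 1) atTop atTop :=
    tendsto_atTop_add_const_right _ _ (tendsto_natCast_atTop_atTop.const_mul_atTop two_pos)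
  have hsub : Tendsto (fun n : ℕ ↦ 2 - 1 / (2 * (n : ℝ) + 1)) atTop (𝓝 (2 - 0)) :=
    tendsto_const_nhds.sub (tendsto_const_nhds.div_atTop hden)
  rw [sub_zero] at hsub
  refine hsub.congr fun n ↦ ?_
  field_simp
  ring

lemma tendsto_scaledCentralBinomSq : Tendsto scaledCentralBinomSq atTop (𝓝 4) := by
  have h := (tendsto_four_mul_add_one_div_two_mul_add_one.const_mul π).div
    Real.Wallis.tendsto_W_nhds_pi_div_two (div_pos pi_pos two_pos).ne'
  rw [show π * 2 / (π / 2) = 4 by field_simp; ring] at h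
  exact h.congr fun n ↦ (scaledCentralBinomSq_eq_div_wallis n).symm

lemma scaledCentralBinomSq_succ_mul (n : ℕ) :
    scaledCentralBinomSq (n + 1) * (4 * ((n : ℝ) + 1) ^ 2 * (4 * n + 1)) =
      scaledCentralBinomSq n * ((2 * n + 1) ^ 2 * (4 * n + 5)) := by
  have hrec : ((n : ℝ) + 1) * Nat.centralBinom (n + 1) = 2 * (2 * n + 1) * Nat.centralBinom n := by
    exact_mod_cast Nat.succ_mul_centralBinom_succ n
  rw [scaledCentralBinomSq, scaledCentralBinomSq, pow_succ, div_mul_eq_mul_div, div_mul_eq_mul_div,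
    div_eq_div_iff (by positivity) (by positivity)]
  push_cast
  linear_combination (4 * (4 * (n : ℝ) + 1) * π * (4 * n + 5) * 16 ^ n) *
    (((n : ℝ) + 1) * Nat.centralBinom (n + 1) + 2 * (2 * n + 1) * Nat.centralBinom n) * hrec

lemma strictMono_scaledCentralBinomSq : StrictMono scaledCentralBinomSq := by
  refine strictMono_nat_of_lt_succ fun n ↦ ?_
  have hpos : 0 < scaledCentralBinomSq n := by
    have := Nat.centralBinom_pos n
    unfold scaledCentralBinomSq
    positivity
  have hden : (0 : ℝ) < 4 * ((n : ℝ) + 1) ^ 2 * (4 * n + 1) := by positivity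
  rw [← mul_lt_mul_iff_left₀ hden, scaledCentralBinomSq_succ_mul]
  nlinarith

lemma scaledCentralBinomSq_lt_four (n : ℕ) : scaledCentralBinomSq n < 4 :=
  (strictMono_scaledCentralBinomSq n.lt_succ_self).trans_le
    (strictMono_scaledCentralBinomSq.monotone.ge_of_tendsto tendsto_scaledCentralBinomSq _)

lemma centralBinom_mul_sqrt_lt (n : ℕ) :
    Nat.centralBinom n * Real.sqrt (π * (4 * n + 1)) < 2 ^ (2 * n + 1) := by
  have hsq : ((Nat.centralBinom n : ℝ) * Real.sqrt (π * (4 * n + 1))) ^ 2 < (2 ^ (2 * n + 1)) ^ 2 := by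
    have h := scaledCentralBinomSq_lt_four n
    rw [scaledCentralBinomSq, div_lt_iff₀ (by positivity)] at h
    rw [mul_pow, Real.sq_sqrt (by positivity)]
    calc _ < (4 : ℝ) * 16 ^ n := h
      _ = _ := by rw [← pow_mul, show (2 * n + 1) * 2 = 2 + 4 * n by ring, pow_add, pow_mul]; norm_num
  exact lt_of_pow_lt_pow_left₀ 2 (by positivity) hsq

theorem stmt4_general (k : ℕ) :
    C k < 2 ^ (2 * k + 1) / (((k : ℝ) + 1) * Real.sqrt (π * (4 * (k : ℝ) + 1))) := by
  rw [C, ← Nat.centralBinom_eq_two_mul_choose, div_lt_div_iff₀ (by positivity) (by positivity),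
    mul_comm _ (Real.sqrt _), ← mul_assoc, mul_comm _ (Real.sqrt _)]
  gcongr
  rw [mul_comm]
  exact centralBinom_mul_sqrt_lt k

theorem stmt4 (k : ℕ) (hk : 1 ≤ k) :
    C k < 2 ^ (2 * k + 1) / (((k : ℝ) + 1) * Real.sqrt (π * (4 * (k : ℝ) + 1))) :=
  stmt4_general k
end

section
/- For every integer k ≥ 1, the k-th Catalan number satisfies C_k > 2^{2k-1}·√(4k-1) / (k(k+1)·√π). -/
open Real Filter
open scoped Topology Nat

/-!
Wallis' product `W k = 16 ^ k / (binom(2k, k) ^ 2 (2k + 1))` increases to `π / 2`. Multiplied by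
the factor `(4k - 1)(2k + 1) / k ^ 2`, which tends to `8`, it is still strictly increasing: the
ratio of consecutive terms is `1 + 1 / ((2k + 1) ^ 2 (4k - 1))`. Hence
`W k (4k - 1)(2k + 1) / k ^ 2 < 4π`, which is the claimed bound squared.
-/

namespace Real.Wallis

theorem W_eq_four_pow_div_centralBinom_sq (n : ℕ) :
    W n = 16 ^ n / ((n.centralBinom : ℝ) ^ 2 * (2 * n + 1)) := by
  have hfact : ((2 * n)! : ℝ) = n.centralBinom * n ! ^ 2 := by
    rw [two_mul, ← Nat.add_choose_mul_factorial_mul_factorial, ← two_mul,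
      ← Nat.centralBinom_eq_two_mul_choose]
    push_cast
    ring
  have hn : (n ! : ℝ) ≠ 0 := by positivity
  rw [W_eq_factorial_ratio, hfact, pow_mul]
  field_simp
  norm_num

noncomputable def correctedW (k : ℕ) : ℝ :=
  W k * ((4 * k - 1) * (2 * k + 1) / (k : ℝ) ^ 2)

theorem correctedW_lt_succ {k : ℕ} (hk : k ≠ 0) : correctedW k < correctedW (k + 1) := by
  have hk' : (1 : ℝ) ≤ k := by exact_mod_cast Nat.one_le_iff_ne_zero.2 hk
  have hW := W_pos k
  unfold correctedW
  rw [W_succ]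
  push_cast
  rw [← sub_pos]
  field_simp
  ring_nf
  positivity

theorem tendsto_correctedW : Tendsto correctedW atTop (𝓝 (4 * π)) := by
  have hpoly : Tendsto (fun k : ℕ => (4 * k - 1) * (2 * k + 1) / (k : ℝ) ^ 2) atTop (𝓝 8) := by
    have hinv : Tendsto (fun k : ℕ => (k : ℝ)⁻¹) atTop (𝓝 0) := tendsto_inv_atTop_nhds_zero_nat
    have hlim := ((hinv.const_mul 2).const_add 8).sub (hinv.pow 2)
    rw [mul_zero, add_zero, zero_pow two_ne_zero, sub_zero] at hlim
    refine hlim.congr' ((eventually_ne_atTop 0).mono fun k hk => ?_)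
    field_simp
    ring
  have hlim := tendsto_W_nhds_pi_div_two.mul hpoly
  rwa [show π / 2 * 8 = 4 * π by ring] at hlim

theorem correctedW_lt {k : ℕ} (hk : k ≠ 0) : correctedW k < 4 * π := by
  have hmono : StrictMono fun n => correctedW (n + 1) :=
    strictMono_nat_of_lt_succ fun n => correctedW_lt_succ n.succ_ne_zero
  have hlim := (tendsto_add_atTop_iff_nat 1).2 tendsto_correctedW
  obtain ⟨n, rfl⟩ := Nat.exists_eq_succ_of_ne_zero hk
  exact (hmono n.lt_succ_self).trans_le (hmono.monotone.ge_of_tendsto hlim (n + 1))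

end Real.Wallis

theorem four_pow_mul_sqrt_lt_centralBinom {k : ℕ} (hk : k ≠ 0) :
    4 ^ k * √(4 * k - 1) < 2 * k * k.centralBinom * √π := by
  have hk' : (1 : ℝ) ≤ k := by exact_mod_cast Nat.one_le_iff_ne_zero.2 hk
  have hcb : (0 : ℝ) < k.centralBinom := by exact_mod_cast k.centralBinom_pos
  have hbound : 16 ^ k * (4 * k - 1) < 4 * π * (k * k.centralBinom) ^ 2 := by
    have hW := Real.Wallis.correctedW_lt hk
    rw [Real.Wallis.correctedW, Real.Wallis.W_eq_four_pow_div_centralBinom_sq,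
      show (16 : ℝ) ^ k / (k.centralBinom ^ 2 * (2 * k + 1)) * ((4 * k - 1) * (2 * k + 1) / k ^ 2)
        = 16 ^ k * (4 * k - 1) / (k * k.centralBinom) ^ 2 by field_simp,
      div_lt_iff₀ (by positivity)] at hW
    exact hW
  have hsq : (4 ^ k * √(4 * k - 1)) ^ 2 < (2 * k * k.centralBinom * √π) ^ 2 := by
    rw [mul_pow, mul_pow, sq_sqrt (by linarith), sq_sqrt pi_pos.le, ← pow_mul, pow_mul']
    norm_num
    linarith
  exact lt_of_pow_lt_pow_left₀ 2 (by positivity) hsq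

theorem stmt5 (k : ℕ) (hk : 1 ≤ k) :
    C k > 2 ^ (2 * k - 1) * Real.sqrt (4 * (k : ℝ) - 1) / ((k : ℝ) * ((k : ℝ) + 1) * Real.sqrt π) := by
  have hk0 : k ≠ 0 := Nat.one_le_iff_ne_zero.1 hk
  have hC : C k = k.centralBinom / (k + 1) := by
    rw [C, Nat.centralBinom_eq_two_mul_choose]
  have htwo : (2 : ℝ) ^ (2 * k - 1) = 4 ^ k / 2 := by
    rw [eq_div_iff two_ne_zero, ← pow_succ, Nat.sub_add_cancel (by omega), pow_mul]
    norm_num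
  rw [gt_iff_lt, hC, htwo, div_lt_div_iff₀ (by positivity) (by positivity)]
  calc 4 ^ k / 2 * √(4 * k - 1) * (k + 1) = 4 ^ k * √(4 * k - 1) * ((k + 1) / 2) := by ring
    _ < 2 * k * k.centralBinom * √π * ((k + 1) / 2) :=
      mul_lt_mul_of_pos_right (four_pow_mul_sqrt_lt_centralBinom hk0) (by positivity)
    _ = k.centralBinom * (k * (k + 1) * √π) := by ring
end

section
/- For every integer n ≥ 1, the sum S_n of the first n Catalan numbers satisfies S_n < 4^{n+1} / (3·√(π n^3)). -/
open Real Filter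

/-!
Wallis' lower bound `W k ≥ (2k+1)/(2k+2) · π/2`, with `W k = 16^k / (binom(2k,k)² (2k+1))`, gives
`π k binom(2k,k)² ≤ 16^k · 4k(k+1)/(2k+1)² < 16^k`, hence `C_k < 4^k / ((k+1) √(π k))`.
The sum of these majorants is at most `4^(n+1) / (3 n √n √π)`: for `n ≥ 3` the increment of the
right-hand side from `n` to `n+1` dominates the next majorant, and `n ≤ 3` is checked numerically.
-/

open Nat in
theorem Real.Wallis.W_eq_centralBinom (k : ℕ) :
    Real.Wallis.W k = 16 ^ k / ((centralBinom k : ℝ) ^ 2 * (2 * k + 1)) := by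
  have hfact : ((2 * k)! : ℝ) = centralBinom k * k ! * k ! := by
    have h := choose_mul_factorial_mul_factorial (show k ≤ 2 * k by omega)
    rw [show 2 * k - k = k by omega, ← centralBinom_eq_two_mul_choose] at h
    exact_mod_cast h.symm
  have hk : (k ! : ℝ) ≠ 0 := by positivity
  rw [Real.Wallis.W_eq_factorial_ratio, hfact, pow_mul]
  field_simp
  norm_num

theorem centralBinom_mul_sqrt_pi_mul_lt_four_pow (k : ℕ) :
    (Nat.centralBinom k : ℝ) * √(π * k) < 4 ^ k := by
  have hb : (0 : ℝ) < Nat.centralBinom k := by exact_mod_cast k.centralBinom_pos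
  have hwallis := Real.Wallis.le_W k
  rw [Real.Wallis.W_eq_centralBinom, div_mul_div_comm,
    div_le_div_iff₀ (by positivity) (by positivity)] at hwallis
  have hsq : ((Nat.centralBinom k : ℝ) * √(π * k)) ^ 2 < (4 ^ k) ^ 2 := by
    rw [mul_pow, Real.sq_sqrt (by positivity), ← pow_mul, show (4 : ℝ) ^ (k * 2) = 16 ^ k by
      rw [pow_mul']; norm_num]
    nlinarith [Real.pi_pos, mul_pos (mul_pos hb hb) Real.pi_pos]
  exact lt_of_pow_lt_pow_left₀ 2 (by positivity) hsq

theorem C_lt_four_pow_div (k : ℕ) (hk : 1 ≤ k) : C k < 4 ^ k / ((k + 1) * √k) / √π := by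
  have hk0 : (0 : ℝ) < k := by exact_mod_cast hk
  have hbound := centralBinom_mul_sqrt_pi_mul_lt_four_pow k
  rw [Real.sqrt_mul Real.pi_pos.le] at hbound
  rw [C, ← Nat.centralBinom_eq_two_mul_choose, div_div, lt_div_iff₀ (by positivity)]
  calc (Nat.centralBinom k : ℝ) / (k + 1) * ((k + 1) * √k * √π)
      = Nat.centralBinom k * (√π * √k) := by field_simp
    _ < 4 ^ k := hbound

theorem one_div_add_one_div_le (x : ℝ) (hx : 3 ≤ x) :
    1 / (3 * x * √x) + 1 / ((x + 2) * √(x + 1)) ≤ 4 / (3 * (x + 1) * √(x + 1)) := by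
  obtain ⟨a, ha, rfl⟩ : ∃ a, 0 < a ∧ a ^ 2 = x := ⟨√x, by positivity, Real.sq_sqrt (by linarith)⟩
  obtain ⟨b, hb, hb2⟩ : ∃ b, 0 < b ∧ b ^ 2 = a ^ 2 + 1 :=
    ⟨√(a ^ 2 + 1), by positivity, Real.sq_sqrt (by positivity)⟩
  rw [Real.sqrt_sq ha.le, ← hb2, Real.sqrt_sq hb.le]
  have key : b ^ 3 * (a ^ 2 + 2) ≤ a ^ 3 * (a ^ 2 + 5) := by
    refine (pow_le_pow_iff_left₀ (by positivity) (by positivity) two_ne_zero).1 ?_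
    have hb6 : b ^ 6 = (a ^ 2 + 1) ^ 3 := by rw [← hb2]; ring
    calc (b ^ 3 * (a ^ 2 + 2)) ^ 2 = (a ^ 2 + 1) ^ 3 * (a ^ 2 + 2) ^ 2 := by rw [← hb6]; ring
      _ ≤ (a ^ 3 * (a ^ 2 + 5)) ^ 2 := by nlinarith [sq_nonneg (a ^ 2 - 3)]
  rw [div_add_div _ _ (by positivity) (by positivity),
    div_le_div_iff₀ (by positivity) (by positivity)]
  linear_combination 3 * b * key + 9 * a ^ 3 * b * hb2

theorem sum_four_pow_div_le (n : ℕ) (hn : 1 ≤ n) :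
    ∑ k ∈ Finset.Icc 1 n, 4 ^ k / ((k + 1) * √k) ≤ 4 ^ (n + 1) / (3 * n * √n) := by
  induction n with
  | zero => omega
  | succ n ih =>
    -- the telescoping step `one_div_add_one_div_le` fails at `x = 2`
    rcases le_or_gt n 2 with hsmall | hn3
    · have h2 : √2 ^ 2 = 2 := Real.sq_sqrt (by norm_num)
      have h3 : √3 ^ 2 = 3 := Real.sq_sqrt (by norm_num)
      have h2pos : 0 < √2 := by positivity
      have h3pos : 0 < √3 := by positivity
      interval_cases n <;> norm_num [Finset.sum_Icc_succ_top] <;> field_simp <;>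
        nlinarith [mul_pos h2pos h3pos]
    · rw [Finset.sum_Icc_succ_top (by omega)]
      calc _ ≤ 4 ^ (n + 1) / (3 * n * √n) + 4 ^ (n + 1) / ((↑(n + 1) + 1) * √↑(n + 1)) := by
            gcongr; exact ih (by omega)
        _ = 4 ^ (n + 1) * (1 / (3 * n * √n) + 1 / ((n + 2) * √(n + 1))) := by push_cast; ring
        _ ≤ 4 ^ (n + 1) * (4 / (3 * (n + 1) * √(n + 1))) := by
            gcongr; exact one_div_add_one_div_le n (by exact_mod_cast hn3)
        _ = 4 ^ (n + 1 + 1) / (3 * ↑(n + 1) * √↑(n + 1)) := by push_cast; ring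

theorem stmt6 (n : ℕ) (hn : 1 ≤ n) : S n < 4 ^ (n + 1) / (3 * Real.sqrt (π * (n : ℝ) ^ 3)) := by
  have hn0 : (0 : ℝ) < n := by exact_mod_cast hn
  calc S n < ∑ k ∈ Finset.Icc 1 n, 4 ^ k / ((k + 1) * √k) / √π :=
        Finset.sum_lt_sum_of_nonempty ⟨1, by simp [hn]⟩ fun k hk =>
          C_lt_four_pow_div k (Finset.mem_Icc.1 hk).1
    _ = (∑ k ∈ Finset.Icc 1 n, 4 ^ k / ((k + 1) * √k)) / √π := (Finset.sum_div ..).symm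
    _ ≤ 4 ^ (n + 1) / (3 * n * √n) / √π := by gcongr; exact sum_four_pow_div_le n hn
    _ = 4 ^ (n + 1) / (3 * √(π * n ^ 3)) := by
      rw [Real.sqrt_mul Real.pi_pos.le, show (n : ℝ) ^ 3 = n ^ 2 * n by ring,
        Real.sqrt_mul (by positivity), Real.sqrt_sq hn0.le]
      ring
end

section
/- For every integer n ≥ 13, the sum S_n of the first n Catalan numbers satisfies 2·S_n + 4·S_{n-1} < 3·u(n), where u(n) = 4^{n+1}/(3√(π n^3)). -/
/-!
Induct on `n` from the numerical base case `n = 13`, where the margin is below `0.1%`. The step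
`2 C_{n+1} + 4 C_n ≤ 3 (u_{n+1} - u_n)` rests on the Wallis-type bound
`binom(2k,k)² ≤ 4 · 16^k / (π (4k + 1))`, which holds because `W_k (4k+2)/(4k+1)` decreases to `π/2`
for the Wallis products `W_k`. After replacing the square roots by rational bounds, the step becomes
an inequality between rational functions of `n`, valid for `n ≥ 13`.
-/

open Real Filter

open Topology
open scoped Nat

namespace Real.Wallis

theorem W_eq_sixteen_pow_div_centralBinom_sq (k : ℕ) :
    W k = 16 ^ k / ((2 * k + 1) * (k.centralBinom : ℝ) ^ 2) := by
  have hfact : ((2 * k)! : ℝ) = k.centralBinom * k ! * k ! := by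
    rw [two_mul, Nat.centralBinom_eq_two_mul_choose, two_mul]
    exact_mod_cast (Nat.add_choose_mul_factorial_mul_factorial k k).symm
  have : (k ! : ℝ) ≠ 0 := by positivity
  rw [W_eq_factorial_ratio, hfact, pow_mul]
  field_simp
  norm_num

theorem antitone_W_mul : Antitone fun k : ℕ => W k * ((4 * k + 2) / (4 * k + 1)) := by
  refine antitone_nat_of_succ_le fun k => ?_
  rw [W_succ, mul_assoc]
  refine mul_le_mul_of_nonneg_left ?_ (W_pos k).le
  push_cast
  rw [div_mul_div_comm, div_mul_div_comm, div_le_div_iff₀ (by positivity) (by positivity)]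
  have hk : (0 : ℝ) ≤ k := k.cast_nonneg
  nlinarith [mul_nonneg hk hk, mul_nonneg (mul_nonneg hk hk) hk]

theorem pi_div_two_le_W_mul (k : ℕ) : π / 2 ≤ W k * ((4 * k + 2) / (4 * k + 1)) := by
  refine antitone_W_mul.le_of_tendsto ?_ k
  have hinv : Tendsto (fun k : ℕ => (4 * (k : ℝ) + 1)⁻¹) atTop (𝓝 0) :=
    (tendsto_atTop_add_const_right _ 1
      (tendsto_natCast_atTop_atTop.const_mul_atTop four_pos)).inv_tendsto_atTop
  have hratio : Tendsto (fun k : ℕ => (4 * (k : ℝ) + 2) / (4 * k + 1)) atTop (𝓝 1) := by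
    refine (by simpa using tendsto_const_nhds.add hinv :
      Tendsto (fun k : ℕ => 1 + (4 * (k : ℝ) + 1)⁻¹) atTop (𝓝 1)).congr fun k => ?_
    field_simp
    ring
  simpa using tendsto_W_nhds_pi_div_two.mul hratio

end Real.Wallis

theorem centralBinom_sq_le (k : ℕ) :
    (k.centralBinom : ℝ) ^ 2 ≤ 4 * 16 ^ k / (π * (4 * k + 1)) := by
  have h := Real.Wallis.pi_div_two_le_W_mul k
  have : (k.centralBinom : ℝ) ≠ 0 := mod_cast k.centralBinom_ne_zero
  rw [Real.Wallis.W_eq_sixteen_pow_div_centralBinom_sq, div_mul_div_comm,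
    le_div_iff₀ (by positivity)] at h
  rw [le_div_iff₀ (by positivity)]
  nlinarith

/- `ratioC` comes from `√(4k+1) ≥ 2√k (8k+5)/(8k+4)`, and `ratioU` from
`(1 + 1/n)^(3/2) ≤ 1 + 3/(2n) + 2/(5n²)`. -/
noncomputable def ratioC (x : ℝ) : ℝ := x * (8 * x + 4) / ((x + 1) * (8 * x + 5))

noncomputable def ratioU (x : ℝ) : ℝ := (10 * x ^ 2 + 15 * x + 4) / (40 * x ^ 2)

lemma u_nonneg (k : ℕ) : 0 ≤ u k := by
  unfold u
  positivity

lemma u_sq (k : ℕ) : u k ^ 2 = 16 ^ (k + 1) / (9 * π) / k ^ 3 := by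
  rw [u, div_pow, mul_pow, sq_sqrt (by positivity), ← pow_mul, mul_comm (k + 1), pow_mul]
  field_simp
  ring

lemma four_mul_C_le {k : ℕ} (hk : 0 < k) : 4 * C k ≤ 3 * u k * ratioC k := by
  have hk : (0 : ℝ) < k := by exact_mod_cast hk
  refine (pow_le_pow_iff_left₀ (by unfold C; positivity)
    (by have := u_nonneg k; unfold ratioC; positivity) two_ne_zero).mp ?_
  have hrat : 64 / ((4 * k + 1) * (k + 1) ^ 2)
      ≤ (16 * (8 * k + 4) ^ 2 / (k * (k + 1) ^ 2 * (8 * k + 5) ^ 2) : ℝ) := by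
    rw [div_le_div_iff₀ (by positivity) (by positivity)]
    nlinarith [sq_nonneg (k + 1 : ℝ)]
  calc (4 * C k) ^ 2 = 16 * (k.centralBinom : ℝ) ^ 2 / (k + 1) ^ 2 := by
        rw [C, ← Nat.centralBinom_eq_two_mul_choose, mul_pow, div_pow]
        ring
    _ ≤ 16 * (4 * 16 ^ k / (π * (4 * k + 1))) / (k + 1) ^ 2 := by
        gcongr
        exact centralBinom_sq_le k
    _ = 16 ^ k / π * (64 / ((4 * k + 1) * (k + 1) ^ 2)) := by
        field_simp
        ring
    _ ≤ 16 ^ k / π * (16 * (8 * k + 4) ^ 2 / (k * (k + 1) ^ 2 * (8 * k + 5) ^ 2)) := by gcongr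
    _ = (3 * u k * ratioC k) ^ 2 := by
        rw [mul_pow, mul_pow, u_sq, ratioC]
        field_simp
        ring

lemma u_le_u_succ_mul {n : ℕ} (hn : 0 < n) : u n ≤ u (n + 1) * ratioU n := by
  have hn : (0 : ℝ) < n := by exact_mod_cast hn
  refine (pow_le_pow_iff_left₀ (u_nonneg n)
    (by have := u_nonneg (n + 1); unfold ratioU; positivity) two_ne_zero).mp ?_
  have hpoly : 100 * n * (n + 1) ^ 3 ≤ ((10 * n ^ 2 + 15 * n + 4) ^ 2 : ℝ) := by
    nlinarith [sq_nonneg (n : ℝ)]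
  have hrat : 1 / (n : ℝ) ^ 3 ≤ (10 * n ^ 2 + 15 * n + 4) ^ 2 / (100 * n ^ 4 * (n + 1) ^ 3) := by
    rw [div_le_div_iff₀ (by positivity) (by positivity)]
    nlinarith [mul_le_mul_of_nonneg_left hpoly (pow_nonneg hn.le 3)]
  calc u n ^ 2 = 16 ^ (n + 1) / (9 * π) * (1 / n ^ 3) := by
        rw [u_sq]
        ring
    _ ≤ 16 ^ (n + 1) / (9 * π) * ((10 * n ^ 2 + 15 * n + 4) ^ 2 / (100 * n ^ 4 * (n + 1) ^ 3)) := by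
        gcongr
    _ = (u (n + 1) * ratioU n) ^ 2 := by
        rw [mul_pow, u_sq, ratioU]
        push_cast
        field_simp
        ring

lemma ratioC_succ_div_two_add_mul_ratioU_le_one {x : ℝ} (hx : 13 ≤ x) :
    ratioC (x + 1) / 2 + (1 + ratioC x) * ratioU x ≤ 1 := by
  have h13 : (0 : ℝ) ≤ x - 13 := by linarith
  have hx0 : (0 : ℝ) < x := by linarith
  unfold ratioC ratioU
  field_simp
  nlinarith [pow_nonneg h13 2, pow_nonneg h13 3, pow_nonneg h13 4, pow_nonneg h13 5]

lemma add_three_mul_u_le_three_mul_u_succ {n : ℕ} (hn : 13 ≤ n) :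
    2 * C (n + 1) + 4 * C n + 3 * u n ≤ 3 * u (n + 1) := by
  have hC₁ := four_mul_C_le n.succ_pos
  have hC₀ := four_mul_C_le (by omega : 0 < n)
  have hu := u_le_u_succ_mul (by omega : 0 < n)
  have hratio := ratioC_succ_div_two_add_mul_ratioU_le_one (x := n) (by exact_mod_cast hn)
  push_cast at hC₁
  have hratioC : 0 ≤ 1 + ratioC n := by unfold ratioC; positivity
  calc 2 * C (n + 1) + 4 * C n + 3 * u n
      ≤ 3 / 2 * u (n + 1) * ratioC (n + 1) + 3 * u n * (1 + ratioC n) := by linarith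
    _ ≤ 3 / 2 * u (n + 1) * ratioC (n + 1) + 3 * (u (n + 1) * ratioU n) * (1 + ratioC n) := by
        gcongr
    _ = 3 * u (n + 1) * (ratioC (n + 1) / 2 + (1 + ratioC n) * ratioU n) := by ring
    _ ≤ 3 * u (n + 1) := mul_le_of_le_one_right (by linarith [u_nonneg (n + 1)]) hratio

lemma S_succ (n : ℕ) : S (n + 1) = S n + C (n + 1) :=
  Finset.sum_Icc_succ_top (Nat.le_add_left 1 n) C

lemma two_mul_S_add_four_mul_S_lt_thirteen : 2 * S 13 + 4 * S 12 < 3 * u 13 := by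
  have hS₁₃ : S 13 = 1033411 := by
    norm_num [S, C, Finset.sum_Icc_succ_top, Nat.choose_eq_factorial_div_factorial, Nat.factorial]
  have hS₁₂ : S 12 = 290511 := by
    norm_num [S, C, Finset.sum_Icc_succ_top, Nat.choose_eq_factorial_div_factorial, Nat.factorial]
  have hsqrt : √(π * 13 ^ 3) < 83.13 := by
    rw [Real.sqrt_lt' (by norm_num)]
    nlinarith [Real.pi_lt_d4]
  have hu : 3 * u 13 = 4 ^ 14 / √(π * 13 ^ 3) := by
    unfold u
    push_cast
    field_simp
  rw [hS₁₃, hS₁₂, hu, lt_div_iff₀ (by positivity)]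
  norm_num at hsqrt ⊢
  linarith

theorem stmt9 (n : ℕ) (hn : 13 ≤ n) : 2 * S n + 4 * S (n - 1) < 3 * u n := by
  induction n, hn using Nat.le_induction with
  | base => exact two_mul_S_add_four_mul_S_lt_thirteen
  | succ n hn ih =>
    obtain ⟨m, rfl⟩ : ∃ m, n = m + 1 := ⟨n - 1, by omega⟩
    simp only [Nat.add_sub_cancel] at ih ⊢
    rw [S_succ (m + 1)]
    linarith [S_succ m, add_three_mul_u_le_three_mul_u_succ hn]
end

section
/- For every integer n ≥ 8, the average of the bounds satisfies u(n) + ϑ(n) > 2·S_n, where u(n) = 4^{n+1}/(3√(π n^3)), ϑ(n) = 4^{n+1}/(3(n+1)√(π n)), and S_n is the sum of the first n Catalan numbers; equivalently, μ(n) = (u(n)+ϑ(n))/2 is an upper bound for S_n for n ≥ 8. -/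
open Real Filter

/-!
Induction on `n` from `n = 8`, where the claim is a numerical check. For the step it suffices that
`2 C (n + 1) ≤ (u + ϑ) (n + 1) - (u + ϑ) n`. Wallis' product gives the sharp bound
`binom(2n, n) ≤ 4 ^ n / √(π (n + 1/4))`, because `W n (2n + 1) / (n + 1/4)` decreases to `π`.
With it, and the AM-GM bounds `√x √(x + 1) ≤ x + 1/2`, `√(x + 1) √(x + 5/4) ≤ x + 9/8`, the step
reduces to the cubic inequality `6x³ - 30x² - 53x - 10 ≥ 0`, valid for `x ≥ 7`.
-/

open Topology

namespace Real.Wallis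

theorem W_mul_centralBinom_sq (n : ℕ) :
    W n * (Nat.centralBinom n : ℝ) ^ 2 * (2 * n + 1) = 16 ^ n := by
  induction n with
  | zero => simp [W]
  | succ n ih =>
    have hrec : ((n : ℝ) + 1) * Nat.centralBinom (n + 1) =
        2 * (2 * n + 1) * Nat.centralBinom n := by
      exact_mod_cast Nat.succ_mul_centralBinom_succ n
    rw [W_succ, pow_succ (16 : ℝ), ← ih]
    push_cast
    field_simp
    linear_combination 4 * W n * (2 * n + 3) *
      ((n + 1) * Nat.centralBinom (n + 1) + 2 * (2 * n + 1) * Nat.centralBinom n : ℝ) * hrec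

noncomputable def piUpper (n : ℕ) : ℝ := W n * (2 * n + 1) / (n + 1 / 4)

theorem antitone_piUpper : Antitone piUpper := by
  refine antitone_nat_of_succ_le fun n ↦ ?_
  rw [piUpper, piUpper, W_succ, div_le_div_iff₀ (by positivity) (by positivity)]
  have := W_pos n
  push_cast
  field_simp
  nlinarith

theorem tendsto_piUpper : Tendsto piUpper atTop (𝓝 π) := by
  have h := tendsto_W_nhds_pi_div_two.mul
    (tendsto_add_mul_div_add_mul_atTop_nhds (1 : ℝ) (1 / 4) 2 one_ne_zero)
  rw [div_one, div_mul_cancel₀ _ two_ne_zero] at h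
  refine h.congr fun n ↦ ?_
  rw [piUpper]
  ring

theorem pi_le_piUpper (n : ℕ) : π ≤ piUpper n :=
  antitone_piUpper.le_of_tendsto tendsto_piUpper n

end Real.Wallis

open Real.Wallis

theorem Nat.centralBinom_le_four_pow_div_sqrt (n : ℕ) :
    (Nat.centralBinom n : ℝ) ≤ 4 ^ n / √(π * (n + 1 / 4)) := by
  have hπ : π * (n + 1 / 4) ≤ W n * (2 * n + 1) :=
    (le_div_iff₀ (by positivity)).1 (pi_le_piUpper n)
  have hsq : π * (n + 1 / 4) * (Nat.centralBinom n : ℝ) ^ 2 ≤ (4 ^ n) ^ 2 :=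
    calc π * (n + 1 / 4) * (Nat.centralBinom n : ℝ) ^ 2
        ≤ W n * (2 * n + 1) * (Nat.centralBinom n : ℝ) ^ 2 := by gcongr
      _ = 16 ^ n := by rw [← W_mul_centralBinom_sq]; ring
      _ = (4 ^ n) ^ 2 := by rw [← pow_mul, mul_comm, pow_mul]; norm_num
  rw [le_div_iff₀ (by positivity)]
  refine (pow_le_pow_iff_left₀ (by positivity) (by positivity) two_ne_zero).1 ?_
  rw [mul_pow, sq_sqrt (by positivity)]
  linarith

lemma Real.sqrt_mul_sqrt_le_add_div_two {p q : ℝ} (hp : 0 ≤ p) (hq : 0 ≤ q) :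
    √p * √q ≤ (p + q) / 2 := by
  nlinarith [sq_nonneg (√p - √q), sq_sqrt hp, sq_sqrt hq]

lemma Real.one_div_sqrt_le {p q : ℝ} (hp : 0 < p) (hq : 0 < q) :
    1 / √q ≤ (p + q) / (2 * q) * (1 / √p) := by
  have := sqrt_mul_sqrt_le_add_div_two hp.le hq.le
  rw [div_mul_div_comm, mul_one, div_le_div_iff₀ (by positivity) (by positivity)]
  calc 1 * (2 * q * √p) = 2 * √q * (√p * √q) := by
        linear_combination (-2 * √p) * mul_self_sqrt hq.le
    _ ≤ 2 * √q * ((p + q) / 2) := by gcongr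
    _ = (p + q) * √q := by ring

noncomputable def ψ (x : ℝ) : ℝ := (2 * x + 1) / (x * (x + 1) * √x)

theorem u_add_ϑ (n : ℕ) : u n + ϑ n = 4 ^ (n + 1) / (3 * √π) * ψ n := by
  have h3 : √(π * (n : ℝ) ^ 3) = √π * (n * √n) := by
    rw [sqrt_mul pi_pos.le, show (n : ℝ) ^ 3 = n ^ 2 * n by ring, sqrt_mul (by positivity),
      sqrt_sq (by positivity)]
  rw [u, ϑ, ψ, h3, sqrt_mul pi_pos.le]
  rcases (Nat.cast_nonneg n : (0 : ℝ) ≤ n).eq_or_lt with h | h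
  · simp [← h]
  · have := sqrt_pos.2 h
    field_simp
    ring

lemma six_div_le_four_mul_ψ_add_one_sub_ψ {x : ℝ} (hx : 7 ≤ x) :
    6 / ((x + 2) * √(x + 5 / 4)) ≤ 4 * ψ (x + 1) - ψ x := by
  have hx0 : 0 < x := by linarith
  set t := 1 / √(x + 1) with ht
  have ht0 : 0 < t := by positivity
  have hc : 1 / √(x + 5 / 4) ≤ (2 * x + 9 / 4) / (2 * (x + 5 / 4)) * t := by
    convert one_div_sqrt_le (by linarith : 0 < x + 1) (by linarith : 0 < x + 5 / 4) using 2
    ring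
  have ha : 1 / √x ≤ (2 * x + 1) / (2 * x) * t := by
    convert one_div_sqrt_le (by linarith : 0 < x + 1) hx0 using 2
    ring
  have hrat : 6 / (x + 2) * ((2 * x + 9 / 4) / (2 * (x + 5 / 4))) ≤
      4 * ((2 * x + 3) / ((x + 1) * (x + 2))) -
        (2 * x + 1) / (x * (x + 1)) * ((2 * x + 1) / (2 * x)) := by
    rw [← sub_nonneg]
    have : 4 * ((2 * x + 3) / ((x + 1) * (x + 2))) -
        (2 * x + 1) / (x * (x + 1)) * ((2 * x + 1) / (2 * x)) -
        6 / (x + 2) * ((2 * x + 9 / 4) / (2 * (x + 5 / 4))) =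
        (6 * x ^ 3 - 30 * x ^ 2 - 53 * x - 10) / (8 * x ^ 2 * (x + 1) * (x + 2) * (x + 5 / 4)) := by
      field_simp
      ring
    rw [this]
    exact div_nonneg (by nlinarith) (by positivity)
  have hψ : ψ x = (2 * x + 1) / (x * (x + 1)) * (1 / √x) := by
    rw [ψ]; field_simp
  have hψ_add_one : ψ (x + 1) = (2 * x + 3) / ((x + 1) * (x + 2)) * t := by
    rw [ψ, ht]; field_simp; ring
  calc 6 / ((x + 2) * √(x + 5 / 4)) = 6 / (x + 2) * (1 / √(x + 5 / 4)) := by field_simp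
    _ ≤ 6 / (x + 2) * ((2 * x + 9 / 4) / (2 * (x + 5 / 4)) * t) := by gcongr
    _ ≤ 4 * ((2 * x + 3) / ((x + 1) * (x + 2)) * t) -
          (2 * x + 1) / (x * (x + 1)) * ((2 * x + 1) / (2 * x) * t) := by
        nlinarith [mul_le_mul_of_nonneg_right hrat ht0.le]
    _ ≤ 4 * ψ (x + 1) - ψ x := by
        rw [hψ_add_one, hψ]
        gcongr

lemma two_mul_C_add_one_le {n : ℕ} (hn : 7 ≤ n) :
    2 * C (n + 1) ≤ u (n + 1) + ϑ (n + 1) - (u n + ϑ n) := by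
  have hx : (7 : ℝ) ≤ n := by exact_mod_cast hn
  have hcb := Nat.centralBinom_le_four_pow_div_sqrt (n + 1)
  rw [Nat.cast_succ, add_assoc, show (1 : ℝ) + 1 / 4 = 5 / 4 by norm_num] at hcb
  calc 2 * C (n + 1) = 2 * (Nat.centralBinom (n + 1) / ((n : ℝ) + 2)) := by
        rw [C, Nat.centralBinom_eq_two_mul_choose]; push_cast; ring
    _ ≤ 2 * (4 ^ (n + 1) / √(π * (n + 5 / 4)) / (n + 2)) := by gcongr
    _ = 4 ^ (n + 1) / (3 * √π) * (6 / ((n + 2) * √(n + 5 / 4))) := by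
        rw [sqrt_mul pi_pos.le]; field_simp; ring
    _ ≤ 4 ^ (n + 1) / (3 * √π) * (4 * ψ (n + 1) - ψ n) := by
        gcongr; exact six_div_le_four_mul_ψ_add_one_sub_ψ hx
    _ = u (n + 1) + ϑ (n + 1) - (u n + ϑ n) := by
        rw [u_add_ϑ, u_add_ϑ]; push_cast; ring

lemma S_eight : S 8 = 2055 := by
  norm_num [S, C, Finset.sum_Icc_succ_top, Nat.choose_eq_factorial_div_factorial, Nat.factorial]

lemma two_mul_S_eight_lt : 2 * S 8 < u 8 + ϑ 8 := by
  have hsqrt : √π * √8 < 5.014 := by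
    rw [← sqrt_mul pi_pos.le, sqrt_lt' (by norm_num)]
    nlinarith [pi_lt_d4]
  have := sqrt_pos.2 pi_pos
  rw [S_eight, u_add_ϑ, ψ]
  push_cast
  rw [div_mul_div_comm, lt_div_iff₀ (by positivity)]
  nlinarith

theorem two_mul_S_lt {n : ℕ} (hn : 8 ≤ n) : 2 * S n < u n + ϑ n := by
  induction n, hn using Nat.le_induction with
  | base => exact two_mul_S_eight_lt
  | succ n hn ih =>
    rw [S, Finset.sum_Icc_succ_top (by omega), ← S]
    linarith [two_mul_C_add_one_le (by omega : 7 ≤ n)]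

theorem stmt11 (n : ℕ) (hn : 8 ≤ n) : u n + ϑ n > 2 * S n ∧ (u n + ϑ n) / 2 > S n := by
  have := two_mul_S_lt hn
  constructor <;> linarith
end

section
/- The ratio u(n)/ϑ(n) = (n+1)/n tends to 1 as n → ∞; consequently both u(n) = 4^{n+1}/(3√(π n^3)) and ϑ(n) = 4^{n+1}/(3(n+1)√(π n)) are asymptotically equal to S_n, i.e., S_n / u(n) → 1 and S_n / ϑ(n) → 1 as n → ∞. -/
/-! By Stirling's formula `binom(2k, k) ~ 4^k / √(π k)`, so `C k ~ 4^k / √(π k³) = (3/4) u k`.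
Since `u k / u (k+1) → 1/4`, the increments `u (k+1) - u k` are also `~ (3/4) u (k+1) ~ C (k+1)`.
Asymptotic equivalence survives summation of nonnegative terms with divergent sum, and the
increments telescope to `u n - u 0 = u n`, hence `S n ~ u n`. Finally `u n / ϑ n = (n+1)/n`. -/

open Real Filter

open Asymptotics Finset

theorem Asymptotics.IsEquivalent.sum_range {f g : ℕ → ℝ} (h : f ~[atTop] g) (hg : 0 ≤ g)
    (h'g : Tendsto (fun n => ∑ i ∈ range n, g i) atTop atTop) :
    (fun n => ∑ i ∈ range n, f i) ~[atTop] fun n => ∑ i ∈ range n, g i := by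
  refine (h.isLittleO.sum_range hg h'g).congr_left fun n => ?_
  simp only [Pi.sub_apply, sum_sub_distrib]

theorem isEquivalent_sub_of_tendsto_div {b : ℕ → ℝ} {r : ℝ} (hb : ∀ᶠ n in atTop, b n ≠ 0)
    (h : Tendsto (fun n => b n / b (n + 1)) atTop (nhds r)) (hr : r ≠ 1) :
    (fun n => b (n + 1) - b n) ~[atTop] fun n => (1 - r) * b (n + 1) := by
  have hconst : (fun n => 1 - b n / b (n + 1)) ~[atTop] fun _ => 1 - r :=
    (isEquivalent_const_iff_tendsto (sub_ne_zero.mpr hr.symm)).mpr (tendsto_const_nhds.sub h)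
  refine (hconst.mul (IsEquivalent.refl (u := fun n => b (n + 1)))).congr_left ?_
  filter_upwards [(tendsto_add_atTop_nat 1).eventually hb] with n hn
  simp only [Pi.mul_apply]
  field_simp

theorem choose_two_mul_isEquivalent :
    (fun n : ℕ => ((2 * n).choose n : ℝ)) ~[atTop] fun n => 4 ^ n / √(π * n) := by
  have h1 := Stirling.factorial_isEquivalent_stirling
  have h2 := h1.comp_tendsto (tendsto_id.const_mul_atTop' two_pos)
  refine ((h2.div (h1.mul h1)).congr_left ?_).congr_right ?_
  · refine Eventually.of_forall fun n => ?_
    simp only [Function.comp_apply, Pi.div_apply, Pi.mul_apply, id]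
    rw [Nat.cast_choose ℝ (by omega : n ≤ 2 * n), show 2 * n - n = n by omega]
  · filter_upwards [eventually_ne_atTop 0] with n hn
    have hn' : (0 : ℝ) < n := by positivity
    simp only [Function.comp_apply, Pi.div_apply, Pi.mul_apply, id]
    have e1 : √(2 * ((2 * n : ℕ) : ℝ) * π) = 2 * √(π * n) := by
      rw [show 2 * ((2 * n : ℕ) : ℝ) * π = 2 ^ 2 * (π * n) by push_cast; ring,
        sqrt_mul (by positivity), sqrt_sq zero_le_two]
    have e2 : √(2 * (n : ℝ) * π) = √2 * √(π * n) := by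
      rw [← sqrt_mul zero_le_two]; ring_nf
    have e3 : (((2 * n : ℕ) : ℝ) / exp 1) ^ (2 * n) = 4 ^ n * ((n / exp 1) ^ n) ^ 2 := by
      push_cast; rw [mul_div_assoc, mul_pow, pow_mul (2 : ℝ)]; ring
    have hs : 0 < √(π * n) := by positivity
    rw [e1, e2, e3]
    field_simp
    rw [sq_sqrt zero_le_two]

theorem tendsto_natCast_add_one_div_natCast :
    Tendsto (fun n : ℕ => ((n : ℝ) + 1) / n) atTop (nhds 1) := by
  simpa only [inv_div, inv_one] using (tendsto_natCast_div_add_atTop (1 : ℝ)).inv₀ one_ne_zero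

theorem natCast_add_one_isEquivalent : (fun n : ℕ => (n : ℝ) + 1) ~[atTop] fun n => (n : ℝ) :=
  isEquivalent_of_tendsto_one tendsto_natCast_add_one_div_natCast

theorem sqrt_mul_pow_three (a : ℝ) {x : ℝ} (hx : 0 ≤ x) : √(a * x ^ 3) = √(a * x) * x := by
  rw [show a * x ^ 3 = a * x * x ^ 2 by ring, sqrt_mul' _ (sq_nonneg x), sqrt_sq hx]

theorem u_zero : u 0 = 0 := by simp [u]

theorem u_div_ϑ (n : ℕ) : u n / ϑ n = ((n : ℝ) + 1) / n := by
  rcases eq_or_ne n 0 with rfl | hn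
  · simp [u_zero] -- both sides are junk zeros
  have : 0 < √(π * n) := by positivity
  rw [u, ϑ, sqrt_mul_pow_three _ n.cast_nonneg]
  field_simp

theorem u_pos {n : ℕ} (hn : n ≠ 0) : 0 < u n := by
  unfold u; positivity

theorem eventually_u_ne_zero : ∀ᶠ n in atTop, u n ≠ 0 :=
  (eventually_ne_atTop 0).mono fun _ hn => (u_pos hn).ne'

theorem tendsto_u_div_u_succ : Tendsto (fun n => u n / u (n + 1)) atTop (nhds (1 / 4)) := by
  have h := (tendsto_natCast_add_one_div_natCast.sqrt.mul
    tendsto_natCast_add_one_div_natCast).const_mul (1 / 4 : ℝ)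
  rw [sqrt_one, mul_one, mul_one] at h
  refine h.congr' ?_
  filter_upwards [eventually_ne_atTop 0] with n hn
  have hn' : (0 : ℝ) < n := by positivity
  have hsqrt : √(π * n) * √(((n : ℝ) + 1) / n) = √(π * (n + 1)) := by
    rw [← sqrt_mul (by positivity)]
    field_simp
  have : 0 < √(π * n) := by positivity
  rw [u, u, sqrt_mul_pow_three _ n.cast_nonneg, sqrt_mul_pow_three _ (n + 1 : ℕ).cast_nonneg]
  push_cast
  rw [← hsqrt]
  field_simp
  ring

theorem C_isEquivalent_u : C ~[atTop] fun k => 3 / 4 * u k := by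
  refine (choose_two_mul_isEquivalent.div natCast_add_one_isEquivalent).congr_right ?_
  filter_upwards [eventually_ne_atTop 0] with k hk
  have : 0 < √(π * k) := by positivity
  simp only [Pi.div_apply]
  rw [u, sqrt_mul_pow_three _ k.cast_nonneg]
  field_simp
  ring

theorem one_le_C {k : ℕ} (hk : k ≠ 0) : 1 ≤ C k := by
  have := Nat.choose_le_centralBinom 1 k
  rw [Nat.choose_one_right, Nat.centralBinom_eq_two_mul_choose] at this
  rw [C, le_div_iff₀ (by positivity), one_mul]
  exact_mod_cast (by omega : k + 1 ≤ 2 * k).trans this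

theorem S_eq_sum_range (n : ℕ) : S n = ∑ i ∈ range n, C (i + 1) := by
  rw [S, range_eq_Ico, sum_Ico_add' C, zero_add, Finset.Ico_add_one_right_eq_Icc]

theorem natCast_le_S (n : ℕ) : (n : ℝ) ≤ S n := by
  rw [S_eq_sum_range]
  calc (n : ℝ) = ∑ _i ∈ range n, (1 : ℝ) := by simp
    _ ≤ ∑ i ∈ range n, C (i + 1) := sum_le_sum fun i _ => one_le_C i.succ_ne_zero

theorem S_isEquivalent_u : S ~[atTop] u := by
  have hdiff : (fun n => u (n + 1) - u n) ~[atTop] fun n => C (n + 1) := by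
    have h :=
      isEquivalent_sub_of_tendsto_div eventually_u_ne_zero tendsto_u_div_u_succ (by norm_num)
    rw [show (1 - 1 / 4 : ℝ) = 3 / 4 by norm_num] at h
    exact h.trans (C_isEquivalent_u.comp_tendsto (tendsto_add_atTop_nat 1)).symm
  have hS : Tendsto (fun n => ∑ i ∈ range n, C (i + 1)) atTop atTop :=
    tendsto_atTop_mono (fun n => (natCast_le_S n).trans_eq (S_eq_sum_range n))
      tendsto_natCast_atTop_atTop
  have := hdiff.sum_range (fun i => zero_le_one.trans (one_le_C i.succ_ne_zero)) hS
  simp only [sum_range_sub (f := u), u_zero, sub_zero, ← S_eq_sum_range] at this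
  exact this.symm

theorem stmt13 :
    (∀ n : ℕ, 1 ≤ n → u n / ϑ n = ((n : ℝ) + 1) / n) ∧
    Tendsto (fun n : ℕ => u n / ϑ n) atTop (nhds 1) ∧
    Tendsto (fun n : ℕ => S n / u n) atTop (nhds 1) ∧
    Tendsto (fun n : ℕ => S n / ϑ n) atTop (nhds 1) := by
  have huϑ : Tendsto (fun n : ℕ => u n / ϑ n) atTop (nhds 1) :=
    tendsto_natCast_add_one_div_natCast.congr fun n => (u_div_ϑ n).symm
  have hSu : Tendsto (fun n : ℕ => S n / u n) atTop (nhds 1) :=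
    (isEquivalent_iff_tendsto_one eventually_u_ne_zero).mp S_isEquivalent_u
  refine ⟨fun n _ => u_div_ϑ n, huϑ, hSu, ?_⟩
  simpa only [mul_one] using
    (hSu.mul huϑ).congr' (eventually_u_ne_zero.mono fun _ hn => div_mul_div_cancel₀ hn)
end

section
/- For every integer n ≥ 13, the inequality 4 ≥ √((n+1)^3/n^3) + √(36(n+1)^3/((n+2)^2(4n+1))) holds. -/
open Real Filter

/-! The two square roots are bounded by `1 + 3/(2n) + 3/(8n²)` and `3 - 3/(2n) - 3/(8n²)`,
truncated expansions in `1/n` whose correction terms cancel in the sum. Squaring reduces each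
bound to a polynomial inequality: the first holds for every `n > 0`, the second once `n ≥ 11`. -/

lemma sqrt_add_one_pow_three_div_pow_three_le {x : ℝ} (hx : 0 < x) :
    √((x + 1) ^ 3 / x ^ 3) ≤ (8 * x ^ 2 + 12 * x + 3) / (8 * x ^ 2) := by
  rw [Real.sqrt_le_iff, div_pow, div_le_div_iff₀ (by positivity) (by positivity)]
  refine ⟨by positivity, ?_⟩
  have hgap : (8 * x ^ 2 + 12 * x + 3) ^ 2 = 64 * x * (x + 1) ^ 3 + (8 * x + 9) := by ring
  nlinarith [pow_pos hx 3]

lemma pow_four_mul_add_one_pow_three_le {x : ℝ} (hx : 11 ≤ x) :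
    2304 * x ^ 4 * (x + 1) ^ 3 ≤ (24 * x ^ 2 - 12 * x - 3) ^ 2 * ((x + 2) ^ 2 * (4 * x + 1)) := by
  obtain ⟨t, ht, rfl⟩ : ∃ t, 0 ≤ t ∧ x = t + 11 := ⟨x - 11, by linarith, by ring⟩
  have hgap : (24 * (t + 11) ^ 2 - 12 * (t + 11) - 3) ^ 2 * (((t + 11) + 2) ^ 2 * (4 * (t + 11) + 1))
      - 2304 * (t + 11) ^ 4 * ((t + 11) + 1) ^ 3
      = 576 * t ^ 6 + 32832 * t ^ 5 + 749088 * t ^ 4 + 8565228 * t ^ 3 + 49311909 * t ^ 2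
        + 116954910 * t + 19891413 := by ring
  linarith [show 0 ≤ 576 * t ^ 6 + 32832 * t ^ 5 + 749088 * t ^ 4 + 8565228 * t ^ 3
    + 49311909 * t ^ 2 + 116954910 * t + 19891413 by positivity]

lemma sqrt_thirtysix_mul_add_one_pow_three_div_le {x : ℝ} (hx : 11 ≤ x) :
    √(36 * (x + 1) ^ 3 / ((x + 2) ^ 2 * (4 * x + 1))) ≤ (24 * x ^ 2 - 12 * x - 3) / (8 * x ^ 2) := by
  rw [Real.sqrt_le_iff, div_pow, div_le_div_iff₀ (by positivity) (by positivity)]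
  constructor
  · have : 0 ≤ 24 * x ^ 2 - 12 * x - 3 := by nlinarith
    positivity
  · nlinarith [pow_four_mul_add_one_pow_three_le hx]

theorem stmt14 (n : ℕ) (hn : 13 ≤ n) :
    4 ≥ Real.sqrt (((n : ℝ) + 1) ^ 3 / (n : ℝ) ^ 3) +
      Real.sqrt (36 * ((n : ℝ) + 1) ^ 3 / (((n : ℝ) + 2) ^ 2 * (4 * (n : ℝ) + 1))) := by
  have hn' : (11 : ℝ) ≤ n := by exact_mod_cast (by omega : 11 ≤ n)
  have hsum : (8 * (n : ℝ) ^ 2 + 12 * n + 3) / (8 * n ^ 2)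
      + (24 * (n : ℝ) ^ 2 - 12 * n - 3) / (8 * n ^ 2) = 4 := by
    field_simp
    ring
  linarith [sqrt_add_one_pow_three_div_pow_three_le (by linarith : (0 : ℝ) < n),
    sqrt_thirtysix_mul_add_one_pow_three_div_le hn']
end

section
/- For every integer k ≥ 1, C_k < 4^k/((k+1)·√(π k)), and moreover the bound ν(k) = 2^{2k+1}/((k+1)√(π(4k+1))) satisfies ν(k) - C_k ≤ (1/3)·(υ(k) - C_k) where υ(k) = 4^k/((k+1)√(π k)). -/
/-!
Both bounds come from Wallis' product `W n → π / 2`, via the identity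
`(centralBinom n)² (2n + 1) W n = 16ⁿ`. The classical lower bound `W n ≥ (2n+1)/(2n+2) · π/2`
gives `centralBinom n < 4ⁿ / √(π n)`, hence `C k < υ(k)`. Since `W n · (8n+4)/(8n+3)` increases to
`π / 2`, also `4ⁿ / √(π (n + 3/8)) ≤ centralBinom n`. The second claim amounts to
`6 · 4ᵏ / √(π (4k+1)) ≤ 4ᵏ / √(π k) + 2 · centralBinom k`, and `π (4k+1) / 4` is the mean of
`π k` and `π (k + 3/8)` with weights `1/3, 2/3`, so this is Jensen's inequality for the convex
function `t ↦ 1 / √t`.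
-/

open Real Filter

open Set
open scoped Topology Nat

namespace Real.Wallis

lemma centralBinom_sq_mul_W (n : ℕ) : (n.centralBinom : ℝ) ^ 2 * (2 * n + 1) * W n = 16 ^ n := by
  have hfac : ((2 * n)! : ℝ) = n.centralBinom * n ! * n ! := by
    rw [Nat.centralBinom, two_mul]
    exact_mod_cast (Nat.add_choose_mul_factorial_mul_factorial n n).symm
  have hc : (n.centralBinom : ℝ) ≠ 0 := by exact_mod_cast n.centralBinom_ne_zero
  rw [W_eq_factorial_ratio, hfac, pow_mul]
  field_simp
  norm_num

lemma pi_mul_lt_mul_W (n : ℕ) : π * n < (2 * n + 1) * W n := by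
  refine lt_of_lt_of_le ?_ (mul_le_mul_of_nonneg_left (le_W n) (by positivity))
  field_simp
  nlinarith [pi_pos]

lemma mul_W_le (n : ℕ) : (2 * n + 1) * W n ≤ π * (n + 3 / 8) := by
  let f : ℕ → ℝ := fun n => W n * ((4 + 8 * n) / (3 + 8 * n))
  have hmono : Monotone f := by
    refine monotone_nat_of_le_succ fun n => ?_
    simp only [f, W_succ]
    push_cast
    rw [mul_assoc, mul_le_mul_iff_right₀ (W_pos n), div_mul_div_comm, div_mul_div_comm,
      div_le_div_iff₀ (by positivity) (by positivity)]
    nlinarith [sq_nonneg (n : ℝ)]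
  have hlim : Tendsto f atTop (𝓝 (π / 2)) := by
    simpa using tendsto_W_nhds_pi_div_two.mul
      (tendsto_add_mul_div_add_mul_atTop_nhds (4 : ℝ) 3 8 (by norm_num : (8 : ℝ) ≠ 0))
  have h := hmono.ge_of_tendsto hlim n
  simp only [f] at h
  rw [mul_div_assoc', div_le_iff₀ (by positivity)] at h
  nlinarith

end Real.Wallis

open Real.Wallis

lemma centralBinom_mul_sqrt_lt_four_pow (n : ℕ) : n.centralBinom * √(π * n) < 4 ^ n := by
  refine lt_of_pow_lt_pow_left₀ 2 (by positivity) ?_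
  rw [mul_pow, sq_sqrt (by positivity), ← pow_mul, mul_comm n 2, pow_mul,
    show (4 : ℝ) ^ 2 = 16 by norm_num, ← centralBinom_sq_mul_W, mul_assoc]
  exact mul_lt_mul_of_pos_left (pi_mul_lt_mul_W n) (pow_pos (mod_cast n.centralBinom_pos) 2)

lemma four_pow_le_centralBinom_mul_sqrt (n : ℕ) :
    4 ^ n ≤ n.centralBinom * √(π * (n + 3 / 8)) := by
  refine le_of_pow_le_pow_left₀ two_ne_zero (by positivity) ?_
  rw [mul_pow, sq_sqrt (by positivity), ← pow_mul, mul_comm n 2, pow_mul,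
    show (4 : ℝ) ^ 2 = 16 by norm_num, ← centralBinom_sq_mul_W, mul_assoc]
  exact mul_le_mul_of_nonneg_left (mul_W_le n) (by positivity)

lemma convexOn_inv_sqrt : ConvexOn ℝ (Ioi 0) fun x : ℝ => (√x)⁻¹ := by
  have himage : Real.sqrt '' Ioi 0 = Ioi 0 := by
    ext y
    refine ⟨?_, fun hy => ⟨y ^ 2, mem_Ioi.2 (pow_pos hy 2), sqrt_sq hy.le⟩⟩
    rintro ⟨x, hx, rfl⟩
    exact sqrt_pos.2 hx
  refine ConvexOn.comp_concaveOn (f := Real.sqrt) ?_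
    (strictConcaveOn_sqrt.concaveOn.subset Ioi_subset_Ici_self (convex_Ioi 0)) ?_ <;> rw [himage]
  · simpa using convexOn_zpow (𝕜 := ℝ) (-1)
  · exact fun a ha b _ hab => inv_anti₀ ha hab

lemma three_div_sqrt_le {x y : ℝ} (hx : 0 < x) (hy : 0 < y) :
    3 / √((x + 2 * y) / 3) ≤ 1 / √x + 2 / √y := by
  have h := convexOn_inv_sqrt.2 (mem_Ioi.2 hx) (mem_Ioi.2 hy)
    (by norm_num : (0 : ℝ) ≤ 1 / 3) (by norm_num : (0 : ℝ) ≤ 2 / 3) (by norm_num)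
  simp only [smul_eq_mul] at h
  rw [show 1 / 3 * x + 2 / 3 * y = (x + 2 * y) / 3 by ring] at h
  rw [div_eq_mul_inv (3 : ℝ), one_div, div_eq_mul_inv (2 : ℝ)]
  linarith

lemma six_mul_four_pow_div_sqrt_le (n : ℕ) (hn : 0 < n) :
    6 * 4 ^ n / √(π * (4 * n + 1)) ≤ 4 ^ n / √(π * n) + 2 * n.centralBinom := by
  have hmean : (π * n + 2 * (π * (n + 3 / 8))) / 3 = π * (4 * n + 1) / 2 ^ 2 := by ring
  have hsqrt : √(π * (4 * n + 1) / 2 ^ 2) = √(π * (4 * n + 1)) / 2 := by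
    rw [sqrt_div' _ (sq_nonneg 2), sqrt_sq zero_le_two]
  have hjensen := mul_le_mul_of_nonneg_left
    (three_div_sqrt_le (by positivity : 0 < π * n) (by positivity : 0 < π * (n + 3 / 8)))
    (by positivity : (0 : ℝ) ≤ 4 ^ n)
  rw [hmean, hsqrt] at hjensen
  have hbinom : 4 ^ n / √(π * (n + 3 / 8)) ≤ n.centralBinom :=
    (div_le_iff₀ (by positivity)).2 (four_pow_le_centralBinom_mul_sqrt n)
  calc 6 * 4 ^ n / √(π * (4 * n + 1)) = 4 ^ n * (3 / (√(π * (4 * n + 1)) / 2)) := by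
        field_simp; ring
    _ ≤ 4 ^ n * (1 / √(π * n) + 2 / √(π * (n + 3 / 8))) := hjensen
    _ = 4 ^ n / √(π * n) + 2 * (4 ^ n / √(π * (n + 3 / 8))) := by ring
    _ ≤ 4 ^ n / √(π * n) + 2 * n.centralBinom := by gcongr

theorem stmt19 (k : ℕ) (hk : 1 ≤ k) :
    C k < 4 ^ k / (((k : ℝ) + 1) * Real.sqrt (π * k)) ∧
    2 ^ (2 * k + 1) / (((k : ℝ) + 1) * Real.sqrt (π * (4 * (k : ℝ) + 1))) - C k ≤
      1 / 3 * (4 ^ k / (((k : ℝ) + 1) * Real.sqrt (π * k)) - C k) := by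
  have hK : (0 : ℝ) < k + 1 := by positivity
  have hC : C k = k.centralBinom / (k + 1) := rfl
  rw [hC, div_mul_eq_div_div_swap, div_mul_eq_div_div_swap, pow_succ, pow_mul,
    ← sub_div, ← sub_div, mul_div_assoc']
  constructor
  · have hsqrt : 0 < √(π * k) := by positivity
    exact div_lt_div_of_pos_right ((lt_div_iff₀ hsqrt).2 (centralBinom_mul_sqrt_lt_four_pow k)) hK
  · refine div_le_div_of_nonneg_right ?_ hK.le
    have h := six_mul_four_pow_div_sqrt_le k hk
    rw [show (6 : ℝ) * 4 ^ k = 3 * (4 ^ k * 2) by ring, mul_div_assoc] at h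
    linarith
end
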